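/- arXiv:1205.5466 — 5 statements merged into one kernel-verified Lean document; each statement's English description precedes it below -/
import Mathlib

section
/- Let r be an integer, let (c_n)_{n∈ℤ} be the integer sequence defined by c_n = r·c_{n−1} − c_{n−2} with c_1 = 0 and c_2 = 1, and let p, q be nonnegative integers. Setting A_i = p·c_{i+1} + q·c_i for i ∈ ℤ, we have A_i² − A_{i+1}·A_{i−1} = p² + q² + r·p·q for every integer i. -/
/-!
Every solution `x` of `x (n + 1) = r * x n - x (n - 1)` has the constant "determinant"
`x n ^ 2 - x (n + 1) * x (n - 1) = x 1 ^ 2 - r * x 1 * x 0 + x 0 ^ 2`: the left side equals the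
binary quadratic form `a ^ 2 - r * a * b + b ^ 2` at `(x n, x (n - 1))`, and the companion matrix
of the recurrence preserves this form. The sequence `A` is a solution, with `A 1 = p` and
`A 0 = -q`.
-/

section ThreeTermRecurrence

variable {R : Type*} [CommRing R] {r : R} {x : ℤ → R}

theorem quadForm_succ_eq_of_recurrence (hx : ∀ n, x (n + 1) = r * x n - x (n - 1)) (n : ℤ) :
    x (n + 1) ^ 2 - r * x (n + 1) * x n + x n ^ 2
      = x n ^ 2 - r * x n * x (n - 1) + x (n - 1) ^ 2 := by
  rw [hx n]
  ring

theorem quadForm_eq_of_recurrence (hx : ∀ n, x (n + 1) = r * x n - x (n - 1)) (n : ℤ) :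
    x (n + 1) ^ 2 - r * x (n + 1) * x n + x n ^ 2 = x 1 ^ 2 - r * x 1 * x 0 + x 0 ^ 2 := by
  induction n using Int.induction_on with
  | zero => simp
  | succ k ih => rw [quadForm_succ_eq_of_recurrence hx, add_sub_cancel_right, ih]
  | pred k ih =>
    rw [← ih, quadForm_succ_eq_of_recurrence hx (-k), sub_add_cancel]

theorem sq_sub_mul_eq_of_recurrence (hx : ∀ n, x (n + 1) = r * x n - x (n - 1)) (n : ℤ) :
    x n ^ 2 - x (n + 1) * x (n - 1) = x 1 ^ 2 - r * x 1 * x 0 + x 0 ^ 2 := by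
  have h := quadForm_eq_of_recurrence hx (n - 1)
  rw [sub_add_cancel] at h
  rw [← h, hx n]
  ring

theorem recurrence_mul_shift_add_mul (hx : ∀ n, x (n + 1) = r * x n - x (n - 1)) (a b : R)
    (n : ℤ) :
    a * x (n + 1 + 1) + b * x (n + 1)
      = r * (a * x (n + 1) + b * x n) - (a * x (n - 1 + 1) + b * x (n - 1)) := by
  rw [hx (n + 1), hx n, add_sub_cancel_right, sub_add_cancel]
  ring

end ThreeTermRecurrence

/-- **Lemma 3.9(b) (Lee–Schiffler).** With `c` the Chebyshev-like sequence and
`A i = p * c (i+1) + q * c i` for nonnegative integers `p, q`, one has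
`A i ^ 2 - A (i+1) * A (i-1) = p^2 + q^2 + r*p*q` for every integer `i`. -/
theorem A_determinant_identity (r : ℤ) (c : ℤ → ℤ)
    (hc1 : c 1 = 0) (hc2 : c 2 = 1)
    (hrec : ∀ n : ℤ, c n = r * c (n - 1) - c (n - 2))
    (p q : ℕ) (A : ℤ → ℤ)
    (hA : ∀ i : ℤ, A i = (p : ℤ) * c (i + 1) + (q : ℤ) * c i) :
    ∀ i : ℤ, A i ^ 2 - A (i + 1) * A (i - 1)
      = (p : ℤ) ^ 2 + (q : ℤ) ^ 2 + r * p * q := by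
  have hc : ∀ n, c (n + 1) = r * c n - c (n - 1) := fun n => by
    rw [hrec (n + 1), add_sub_cancel_right, show n + 1 - 2 = n - 1 by ring]
  have hc0 : c 0 = -1 := by
    have h := hc 1
    norm_num [hc1, hc2] at h
    linarith
  have hArec : ∀ n, A (n + 1) = r * A n - A (n - 1) := fun n => by
    simpa only [hA] using recurrence_mul_shift_add_mul hc (p : ℤ) q n
  have hA1 : A 1 = p := by simp [hA, hc1, hc2]
  have hA0 : A 0 = -q := by simp [hA, hc1, hc0]
  intro i
  rw [sq_sub_mul_eq_of_recurrence hArec, hA1, hA0]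
  ring
end

section
/- Let g, h, b be nonnegative integers with h ≤ g, let I be a finite set of integers with m ≤ b for every m ∈ I, and let q : I → ℤ. Suppose that the polynomial ∑_{m∈I} q(m)·x^{b−m} ∈ ℤ[x] is divisible by (1+x)^g and that the quotient has nonnegative coefficients. Let d_0, …, d_h be nonnegative integers and define p(m) = ∑_{i=0}^h d_i·binom(b−m, i). Then the polynomial ∑_{m∈I} p(m)·q(m)·x^{b−m} is divisible by (1+x)^{g−h} in ℤ[x], and the resulting quotient has nonnegative coefficients. -/
open Polynomial Finset

/-!
Multiplying the coefficient of `X ^ n` by `n.choose i` is the operator `X ^ i * D⁽ⁱ⁾`, where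
`D⁽ⁱ⁾` is the `i`-th Hasse derivative. By the Leibniz rule and
`D⁽ʲ⁾ (1 + X) ^ g = g.choose j • (1 + X) ^ (g - j)`, `D⁽ⁱ⁾ ((1 + X) ^ g * Q)` is `(1 + X) ^ (g - i)`
times a combination of the `D⁽ᵏ⁾ Q` with coefficients in `ℕ[X]`. Polynomials with nonnegative
integer coefficients form the subsemiring `lifts (Nat.castRingHom ℤ)`, which is closed under Hasse
derivatives, so all quotients stay in it.
-/

theorem Nat.choose_add_mul_choose (g j n : ℕ) :
    g.choose (n + j) * (n + j).choose j = g.choose j * (g - j).choose n := by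
  rcases le_or_gt (n + j) g with h | h
  · simpa using Nat.choose_mul (n := g) (k := n + j) (s := j) (by omega)
  · rcases le_or_gt j g with hj | hj
    · rw [Nat.choose_eq_zero_of_lt h, Nat.choose_eq_zero_of_lt (show g - j < n by omega)]
      simp
    · rw [Nat.choose_eq_zero_of_lt h, Nat.choose_eq_zero_of_lt hj]
      simp

namespace Polynomial

section Semiring

variable {S : Type*} [Semiring S]

theorem hasseDeriv_one_add_X_pow (j g : ℕ) :
    hasseDeriv j ((1 + X : S[X]) ^ g) = (g.choose j : S[X]) * (1 + X) ^ (g - j) := by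
  ext n
  rw [hasseDeriv_coeff, coeff_natCast_mul, coeff_one_add_X_pow, coeff_one_add_X_pow,
    ← Nat.cast_mul, ← Nat.cast_mul, mul_comm, Nat.choose_add_mul_choose]

theorem coeff_X_pow_mul_hasseDeriv (k n : ℕ) (p : S[X]) :
    (X ^ k * hasseDeriv k p).coeff n = n.choose k * p.coeff n := by
  rw [coeff_X_pow_mul', hasseDeriv_coeff]
  split_ifs with h
  · rw [Nat.sub_add_cancel h]
  · rw [Nat.choose_eq_zero_of_lt (not_le.mp h), Nat.cast_zero, zero_mul]

theorem X_pow_mul_hasseDeriv_sum_C_mul_X_pow {ι : Type*} (k : ℕ) (I : Finset ι) (a : ι → S)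
    (e : ι → ℕ) :
    X ^ k * hasseDeriv k (∑ m ∈ I, C (a m) * X ^ e m) =
      ∑ m ∈ I, C ((e m).choose k * a m) * X ^ e m := by
  ext n
  simp only [coeff_X_pow_mul_hasseDeriv, finsetSum_coeff, coeff_C_mul_X_pow, mul_sum]
  refine sum_congr rfl fun m _ => ?_
  split_ifs with h
  · rw [h]
  · rw [mul_zero]

theorem sum_C_mul_X_pow_eq_sum_natCast_mul_X_pow_mul_hasseDeriv {ι : Type*} (s : Finset ℕ)
    (d : ℕ → ℕ) (I : Finset ι) (a : ι → S) (e : ι → ℕ) :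
    ∑ m ∈ I, C ((∑ i ∈ s, (d i : S) * (e m).choose i) * a m) * X ^ e m =
      ∑ i ∈ s, (d i : S[X]) * (X ^ i * hasseDeriv i (∑ m ∈ I, C (a m) * X ^ e m)) := by
  simp_rw [X_pow_mul_hasseDeriv_sum_C_mul_X_pow]
  simp only [mul_sum, sum_mul, map_sum, mul_assoc, C_mul, map_natCast]
  exact sum_comm

end Semiring

section CommSemiring

variable {S : Type*} [CommSemiring S]

theorem hasseDeriv_one_add_X_pow_mul {i g : ℕ} (hig : i ≤ g) (Q : S[X]) :
    hasseDeriv i ((1 + X) ^ g * Q) =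
      (1 + X) ^ (g - i) *
        ∑ jl ∈ antidiagonal i, (g.choose jl.1 : S[X]) * (1 + X) ^ (i - jl.1) * hasseDeriv jl.2 Q := by
  rw [hasseDeriv_mul, mul_sum]
  refine sum_congr rfl fun jl hjl => ?_
  have hj : jl.1 ≤ i := mem_antidiagonal.mp hjl ▸ Nat.le_add_right _ _
  rw [hasseDeriv_one_add_X_pow, show g - jl.1 = g - i + (i - jl.1) by omega, pow_add]
  ring

variable {R : Type*} [Semiring R] (f : R →+* S)

theorem hasseDeriv_mem_lifts {p : S[X]} (hp : p ∈ lifts f) (k : ℕ) :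
    hasseDeriv k p ∈ lifts f := by
  rw [lifts_iff_coeff_lifts] at hp ⊢
  intro n
  obtain ⟨r, hr⟩ := hp (n + k)
  exact ⟨(n + k).choose k * r, by rw [hasseDeriv_coeff, map_mul, map_natCast, hr]⟩

theorem one_add_X_mem_lifts : (1 + X : S[X]) ∈ lifts f :=
  add_mem (one_mem _) (X_mem_lifts f)

theorem exists_sum_X_pow_mul_hasseDeriv_eq_one_add_X_pow_mul {g h : ℕ} (hhg : h ≤ g)
    {Q : S[X]} (hQ : Q ∈ lifts f) (d : ℕ → ℕ) :
    ∃ Q' ∈ lifts f,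
      ∑ i ∈ range (h + 1), (d i : S[X]) * (X ^ i * hasseDeriv i ((1 + X) ^ g * Q)) =
        (1 + X) ^ (g - h) * Q' := by
  refine ⟨∑ i ∈ range (h + 1), (d i : S[X]) * X ^ i * (1 + X) ^ (h - i) *
      ∑ jl ∈ antidiagonal i, (g.choose jl.1 : S[X]) * (1 + X) ^ (i - jl.1) * hasseDeriv jl.2 Q,
    ?_, ?_⟩
  · have h1X := one_add_X_mem_lifts f
    refine sum_mem fun i _ => mul_mem (mul_mem (mul_mem (natCast_mem _ _)
      (pow_mem (X_mem_lifts f) _)) (pow_mem h1X _)) (sum_mem fun jl _ => ?_)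
    exact mul_mem (mul_mem (natCast_mem _ _) (pow_mem h1X _)) (hasseDeriv_mem_lifts f hQ _)
  · rw [mul_sum]
    refine sum_congr rfl fun i hi => ?_
    have hih : i ≤ h := Nat.lt_succ_iff.mp (mem_range.mp hi)
    rw [hasseDeriv_one_add_X_pow_mul (hih.trans hhg), show g - i = g - h + (h - i) by omega,
      pow_add]
    ring

end CommSemiring

theorem mem_lifts_natCast_iff {p : ℤ[X]} :
    p ∈ lifts (Nat.castRingHom ℤ) ↔ ∀ n, 0 ≤ p.coeff n := by
  simp only [lifts_iff_coeff_lifts, Set.mem_range, eq_natCast]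
  exact forall_congr' fun n =>
    ⟨fun ⟨k, hk⟩ => hk ▸ Int.natCast_nonneg k, fun h => ⟨_, Int.toNat_of_nonneg h⟩⟩

end Polynomial

theorem divisibility_transfer_general (g h b : ℕ) (hhg : h ≤ g)
    (I : Finset ℤ) (q : ℤ → ℤ)
    (Q : Polynomial ℤ) (hQ : ∀ k : ℕ, 0 ≤ Q.coeff k)
    (hdiv : ∑ m ∈ I, C (q m) * X ^ ((b : ℤ) - m).toNat = (1 + X) ^ g * Q)
    (d : ℕ → ℕ) (p : ℤ → ℤ)
    (hp : ∀ m : ℤ, p m = ∑ i ∈ Finset.range (h + 1),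
      (d i : ℤ) * (((b : ℤ) - m).toNat.choose i : ℤ)) :
    ∃ Q' : Polynomial ℤ, (∀ k : ℕ, 0 ≤ Q'.coeff k) ∧
      ∑ m ∈ I, C (p m * q m) * X ^ ((b : ℤ) - m).toNat = (1 + X) ^ (g - h) * Q' := by
  obtain ⟨Q', hQ'_nonneg, hQ'⟩ := exists_sum_X_pow_mul_hasseDeriv_eq_one_add_X_pow_mul
    (Nat.castRingHom ℤ) hhg (mem_lifts_natCast_iff.mpr hQ) d
  refine ⟨Q', mem_lifts_natCast_iff.mp hQ'_nonneg, ?_⟩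
  simp only [hp]
  rw [sum_C_mul_X_pow_eq_sum_natCast_mul_X_pow_mul_hasseDeriv, hdiv, hQ']

/-- **Lemma 4.5 (Lee–Schiffler).** If `∑_{m ∈ I} q(m) x^{b-m}` is divisible by `(1+x)^g`
with a quotient having nonnegative coefficients, and `p(m) = ∑_{i=0}^{h} d_i * binom(b-m, i)`
with all `d_i ≥ 0` and `h ≤ g`, then `∑_{m ∈ I} p(m) q(m) x^{b-m}` is divisible by
`(1+x)^{g-h}` with a quotient having nonnegative coefficients. -/
theorem divisibility_transfer (g h b : ℕ) (hhg : h ≤ g)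
    (I : Finset ℤ) (hI : ∀ m ∈ I, m ≤ (b : ℤ)) (q : ℤ → ℤ)
    (Q : Polynomial ℤ) (hQ : ∀ k : ℕ, 0 ≤ Q.coeff k)
    (hdiv : ∑ m ∈ I, C (q m) * X ^ ((b : ℤ) - m).toNat = (1 + X) ^ g * Q)
    (d : ℕ → ℕ) (p : ℤ → ℤ)
    (hp : ∀ m : ℤ, p m = ∑ i ∈ Finset.range (h + 1),
      (d i : ℤ) * (((b : ℤ) - m).toNat.choose i : ℤ)) :
    ∃ Q' : Polynomial ℤ, (∀ k : ℕ, 0 ≤ Q'.coeff k) ∧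
      ∑ m ∈ I, C (p m * q m) * X ^ ((b : ℤ) - m).toNat = (1 + X) ^ (g - h) * Q' :=
  divisibility_transfer_general g h b hhg I q Q hQ hdiv d p hp
end

section
/- For all nonnegative integers a, b, c there exist nonnegative integers d_0, …, d_c such that binom(a·X + b, c) = ∑_{i=0}^c d_i·binom(X, i) for every nonnegative integer X. -/
/-- **Lemma 4.6 (Lee–Schiffler).** For all nonnegative integers `a, b, c` there exist
nonnegative integers `d_0, …, d_c` with
`(a*X+b).choose c = ∑_{i=0}^{c} d_i * X.choose i` for every nonnegative integer `X`. -/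
theorem binom_linear_expansion (a b c : ℕ) :
    ∃ d : ℕ → ℕ, ∀ X : ℕ,
      (a * X + b).choose c = ∑ i ∈ Finset.range (c + 1), d i * X.choose i := by
  induction c generalizing b with
  | zero => exact ⟨fun _ => 1, fun X => by simp⟩
  | succ c ih =>
    obtain ⟨D, hD⟩ : ∃ D : ℕ → ℕ → ℕ, ∀ t X,
        (a * X + (b + t)).choose c = ∑ i ∈ Finset.range (c+1), D t i * X.choose i := by
      choose D hD using fun t => ih (b + t)
      exact ⟨D, hD⟩
    refine ⟨fun i => match i with
      | 0 => b.choose (c+1)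
      | j+1 => ∑ t ∈ Finset.range a, D t j, ?_⟩
    intro X
    induction X with
    | zero =>
      rw [Finset.sum_range_succ']
      simp
    | succ X ihX =>
      have key : ∀ m k : ℕ, (m + k).choose (c+1)
          = m.choose (c+1) + ∑ t ∈ Finset.range k, (m + t).choose c := by
        intro m k
        induction k with
        | zero => simp
        | succ k ihk =>
          rw [Finset.sum_range_succ, ← Nat.add_assoc, Nat.choose_succ_succ (m + k) c, ihk]
          ring
      have lhs : (a * (X+1) + b).choose (c+1)
          = (a*X+b).choose (c+1) + ∑ t ∈ Finset.range a, (a*X+(b+t)).choose c := by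
        have h1 : a * (X+1) + b = (a*X+b) + a := by ring
        rw [h1, key]
        congr 1
        exact Finset.sum_congr rfl fun t _ => by rw [Nat.add_assoc]
      have h2 : ∑ i ∈ Finset.range (c+1), (∑ t ∈ Finset.range a, D t i) * X.choose i
          = ∑ t ∈ Finset.range a, (a*X+(b+t)).choose c := by
        rw [Finset.sum_congr rfl (fun i _ => Finset.sum_mul _ _ _), Finset.sum_comm]
        exact Finset.sum_congr rfl fun t _ => (hD t X).symm
      have hR : (∑ i ∈ Finset.range (c+1+1),
            (match i with
              | 0 => b.choose (c+1)
              | j+1 => ∑ t ∈ Finset.range a, D t j) * (X+1).choose i)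
          = (∑ i ∈ Finset.range (c+1+1),
            (match i with
              | 0 => b.choose (c+1)
              | j+1 => ∑ t ∈ Finset.range a, D t j) * X.choose i)
            + ∑ t ∈ Finset.range a, (a*X+(b+t)).choose c := by
        conv_lhs => rw [Finset.sum_range_succ']
        conv_rhs => rw [Finset.sum_range_succ']
        simp only [Nat.choose_succ_succ X, Nat.choose_zero_right, Nat.mul_add,
          Finset.sum_add_distrib]
        rw [h2]
        ring
      rw [lhs, ihX, hR]
end

section
/- Fix integers r, s, t ≥ 2 with r² + s² + t² − r·s·t ≤ 4, and let B be the skew-symmetric 3×3 integer matrix with b_12 = r, b_23 = t, b_31 = s (the cyclic quiver with r arrows 1→2, t arrows 2→3 and s arrows 3→1). For n ≥ 1 let B(n) be the matrix obtained from B by applying n matrix mutations alternately at vertices 1 and 2, starting with vertex 1. Then: if n is even, the quiver of B(n) has r arrows 1→2, c_{n+1}·s − c_n·t arrows 2→3, and c_{n+2}·s − c_{n+1}·t arrows 3→1; if n is odd, the quiver of B(n) has r arrows 2→1, c_{n+1}·s − c_n·t arrows 1→3, and c_{n+2}·s − c_{n+1}·t arrows 3→2. In particular, c_{n+1}·s −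 c_n·t ≥ 2 for all n ≥ 1. -/
/-- Matrix mutation of a skew-symmetric integer matrix at index `k`. -/
def matMut (B : Matrix (Fin 3) (Fin 3) ℤ) (k : Fin 3) : Matrix (Fin 3) (Fin 3) ℤ :=
  Matrix.of fun i j =>
    if i = k ∨ j = k then -B i j
    else B i j + (B i k).sign * max (B i k * B k j) 0

/-- The matrix obtained from `B` by `n` mutations alternately at vertices `1` and `2`
(indices `0` and `1`), starting with vertex `1`. -/
def altMut (B : Matrix (Fin 3) (Fin 3) ℤ) : ℕ → Matrix (Fin 3) (Fin 3) ℤ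
  | 0 => B
  | m + 1 => matMut (altMut B m) (if m % 2 = 0 then 0 else 1)

/-! With `D n = c (n + 1) * s - c n * t` one has `D 0 = t`, `D 1 = s` and
`D (n + 2) = r * D (n + 1) - D n`. Mutating the cyclic quiver with multiplicities `r`, `D n`,
`D (n + 1)` at the right vertex reverses it and replaces `D n` by `r * D (n + 1) - D n`, as long
as the multiplicities are nonnegative. This step is a Vieta jump, so it preserves
`r ^ 2 + D n ^ 2 + D (n + 1) ^ 2 - r * D n * D (n + 1)`; since this stays `≤ 4`, every new
multiplicity is at least `2`. -/

-- The exchange matrix of the cyclic quiver `1 →[a] 2 →[b] 3 →[c] 1`.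
def cyclicMatrix (a b c : ℤ) : Matrix (Fin 3) (Fin 3) ℤ :=
  !![0, a, -c; -a, 0, b; c, -b, 0]

lemma sign_mul_max_mul_zero {x y : ℤ} (hx : 0 ≤ x) (hy : 0 ≤ y) :
    x.sign * max (x * y) 0 = x * y := by
  rcases hx.eq_or_lt with rfl | hx
  · simp
  · rw [Int.sign_eq_one_of_pos hx, max_eq_left (mul_nonneg hx.le hy), one_mul]

lemma matMut_cyclicMatrix_zero {a c : ℤ} (b : ℤ) (ha : 0 ≤ a) (hc : 0 ≤ c) :
    matMut (cyclicMatrix a b c) 0 = -cyclicMatrix a (a * c - b) c := by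
  ext i j
  fin_cases i <;> fin_cases j <;>
    simp [matMut, cyclicMatrix, sign_mul_max_mul_zero ha hc, sign_mul_max_mul_zero hc ha,
      mul_self_nonneg] <;> ring

lemma matMut_neg_cyclicMatrix_one {a b : ℤ} (c : ℤ) (ha : 0 ≤ a) (hb : 0 ≤ b) :
    matMut (-cyclicMatrix a b c) 1 = cyclicMatrix a b (a * b - c) := by
  ext i j
  fin_cases i <;> fin_cases j <;>
    simp [matMut, cyclicMatrix, sign_mul_max_mul_zero ha hb, sign_mul_max_mul_zero hb ha,
      mul_self_nonneg] <;> ring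

-- If `z ≤ 1`, the form is decreasing in `z` and already exceeds `4` at `z = 1`.
lemma two_le_of_markov_form_le_four {r y z : ℤ} (hr : 2 ≤ r) (hy : 2 ≤ y)
    (h : r ^ 2 + y ^ 2 + z ^ 2 - r * y * z ≤ 4) : 2 ≤ z := by
  by_contra! hz
  nlinarith [sq_nonneg (2 * r - y), mul_nonneg (by linarith : (0 : ℤ) ≤ 1 - z)
    (by nlinarith : (0 : ℤ) ≤ r * y - z - 1)]

lemma linear_recurrence_shift_comb {r : ℤ} {c : ℤ → ℤ}
    (hrec : ∀ m : ℤ, c m = r * c (m - 1) - c (m - 2)) (s t m : ℤ) :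
    c (m + 3) * s - c (m + 2) * t
      = r * (c (m + 2) * s - c (m + 1) * t) - (c (m + 1) * s - c m * t) := by
  have h3 := hrec (m + 3)
  have h2 := hrec (m + 2)
  ring_nf at h3 h2 ⊢
  linear_combination s * h3 - t * h2

section LinearRecurrence

variable {r : ℤ} {D : ℕ → ℤ} (hD : ∀ n, D (n + 2) = r * D (n + 1) - D n)
include hD

lemma markov_form_eq (n : ℕ) :
    r ^ 2 + D n ^ 2 + D (n + 1) ^ 2 - r * D n * D (n + 1)
      = r ^ 2 + D 0 ^ 2 + D 1 ^ 2 - r * D 0 * D 1 := by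
  induction n with
  | zero => rfl
  | succ n ih => rw [hD n, ← ih]; ring

lemma two_le_succ_of_markov_form_le_four (hr : 2 ≤ r) (h1 : 2 ≤ D 1)
    (h : r ^ 2 + D 0 ^ 2 + D 1 ^ 2 - r * D 0 * D 1 ≤ 4) (n : ℕ) : 2 ≤ D (n + 1) := by
  induction n with
  | zero => exact h1
  | succ n ih => exact two_le_of_markov_form_le_four hr ih (markov_form_eq hD (n + 1) ▸ h)

lemma altMut_cyclicMatrix (hr : 0 ≤ r) (hpos : ∀ n, 0 ≤ D (n + 1)) (m : ℕ) :
    altMut (cyclicMatrix r (D 0) (D 1)) (2 * m) = cyclicMatrix r (D (2 * m)) (D (2 * m + 1)) ∧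
      altMut (cyclicMatrix r (D 0) (D 1)) (2 * m + 1)
        = -cyclicMatrix r (D (2 * m + 2)) (D (2 * m + 1)) := by
  have mut_zero (m : ℕ)
      (h : altMut (cyclicMatrix r (D 0) (D 1)) (2 * m)
        = cyclicMatrix r (D (2 * m)) (D (2 * m + 1))) :
      altMut (cyclicMatrix r (D 0) (D 1)) (2 * m + 1)
        = -cyclicMatrix r (D (2 * m + 2)) (D (2 * m + 1)) := by
    rw [altMut, if_pos (by omega), h, matMut_cyclicMatrix_zero _ hr (hpos _), hD]
  induction m with
  | zero => exact ⟨rfl, mut_zero 0 rfl⟩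
  | succ m ih =>
    have hD' : D (2 * m + 3) = r * D (2 * m + 2) - D (2 * m + 1) := hD (2 * m + 1)
    have h : altMut (cyclicMatrix r (D 0) (D 1)) (2 * m + 2)
        = cyclicMatrix r (D (2 * m + 2)) (D (2 * m + 3)) := by
      rw [altMut, if_neg (by omega), ih.2, matMut_neg_cyclicMatrix_one _ hr (hpos _), hD']
    exact ⟨h, mut_zero _ h⟩

end LinearRecurrence

theorem alternating_mutation_quiver_general (r s t : ℕ)
    (hr : 2 ≤ r) (hs : 2 ≤ s)
    (hMarkov : (r : ℤ) ^ 2 + (s : ℤ) ^ 2 + (t : ℤ) ^ 2 - (r : ℤ) * s * t ≤ 4)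
    (c : ℤ → ℤ) (hc1 : c 1 = 0) (hc2 : c 2 = 1)
    (hrec : ∀ m : ℤ, c m = (r : ℤ) * c (m - 1) - c (m - 2))
    (B : Matrix (Fin 3) (Fin 3) ℤ)
    (hB : B = !![0, (r : ℤ), -(s : ℤ); -(r : ℤ), 0, (t : ℤ); (s : ℤ), -(t : ℤ), 0]) :
    ∀ n : ℕ, 1 ≤ n →
      (Even n →
        altMut B n 0 1 = (r : ℤ) ∧
        altMut B n 1 2 = c ((n : ℤ) + 1) * s - c (n : ℤ) * t ∧
        altMut B n 2 0 = c ((n : ℤ) + 2) * s - c ((n : ℤ) + 1) * t) ∧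
      (Odd n →
        altMut B n 1 0 = (r : ℤ) ∧
        altMut B n 0 2 = c ((n : ℤ) + 1) * s - c (n : ℤ) * t ∧
        altMut B n 2 1 = c ((n : ℤ) + 2) * s - c ((n : ℤ) + 1) * t) ∧
      2 ≤ c ((n : ℤ) + 1) * s - c (n : ℤ) * t := by
  intro n hn
  have hc0 : c 0 = -1 := by
    have h := hrec 2
    norm_num [hc1, hc2] at h
    linarith
  set D : ℕ → ℤ := fun n => c (n + 1) * s - c n * t with hD
  have hDrec (n : ℕ) : D (n + 2) = r * D (n + 1) - D n := by
    simpa [hD, add_assoc] using linear_recurrence_shift_comb hrec s t n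
  have hB' : B = cyclicMatrix r (D 0) (D 1) := by simp [hB, hD, hc0, hc1, hc2, cyclicMatrix]
  have htwo := two_le_succ_of_markov_form_le_four hDrec (by exact_mod_cast hr)
    (by simpa [hD, hc1, hc2] using hs) (by simp [hD, hc0, hc1, hc2]; linarith)
  have hDsucc : D (n + 1) = c (n + 2) * s - c (n + 1) * t := by simp [hD, add_assoc]
  have hpos (k : ℕ) : 0 ≤ D (k + 1) := zero_le_two.trans (htwo k)
  have hr0 : (0 : ℤ) ≤ r := by positivity
  rw [show c (n + 1) * s - c n * t = D n from rfl, ← hDsucc, hB']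
  refine ⟨fun ⟨m, hm⟩ => ?_, fun ⟨m, hm⟩ => ?_, ?_⟩
  · obtain rfl : n = 2 * m := by omega
    rw [(altMut_cyclicMatrix hDrec hr0 hpos m).1]
    simp [cyclicMatrix]
  · subst hm
    rw [(altMut_cyclicMatrix hDrec hr0 hpos m).2]
    simp [cyclicMatrix]
  · obtain ⟨k, rfl⟩ := Nat.exists_eq_add_of_le' hn
    exact htwo k

/-- **Lemma 4.1(2),(3) (Lee–Schiffler).** For the non-acyclic cyclic quiver with `r`
arrows `1 → 2`, `t` arrows `2 → 3` and `s` arrows `3 → 1`, the quiver obtained by `n`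
alternating mutations at `1, 2, 1, 2, …` is cyclic with multiplicities given by the
Chebyshev-like sequence `c`; in particular `c (n+1) * s - c n * t ≥ 2` for `n ≥ 1`. -/
theorem alternating_mutation_quiver (r s t : ℕ)
    (hr : 2 ≤ r) (hs : 2 ≤ s) (ht : 2 ≤ t)
    (hMarkov : (r : ℤ) ^ 2 + (s : ℤ) ^ 2 + (t : ℤ) ^ 2 - (r : ℤ) * s * t ≤ 4)
    (c : ℤ → ℤ) (hc1 : c 1 = 0) (hc2 : c 2 = 1)
    (hrec : ∀ m : ℤ, c m = (r : ℤ) * c (m - 1) - c (m - 2))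
    (B : Matrix (Fin 3) (Fin 3) ℤ)
    (hB : B = !![0, (r : ℤ), -(s : ℤ); -(r : ℤ), 0, (t : ℤ); (s : ℤ), -(t : ℤ), 0]) :
    ∀ n : ℕ, 1 ≤ n →
      (Even n →
        altMut B n 0 1 = (r : ℤ) ∧
        altMut B n 1 2 = c ((n : ℤ) + 1) * s - c (n : ℤ) * t ∧
        altMut B n 2 0 = c ((n : ℤ) + 2) * s - c ((n : ℤ) + 1) * t) ∧
      (Odd n →
        altMut B n 1 0 = (r : ℤ) ∧
        altMut B n 0 2 = c ((n : ℤ) + 1) * s - c (n : ℤ) * t ∧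
        altMut B n 2 1 = c ((n : ℤ) + 2) * s - c ((n : ℤ) + 1) * t) ∧
      2 ≤ c ((n : ℤ) + 1) * s - c (n : ℤ) * t :=
  alternating_mutation_quiver_general r s t hr hs hMarkov c hc1 hc2 hrec B hB
end

section
/- Let r, s, t ≥ 1 be integers and let B be the skew-symmetric 3×3 integer matrix with b_12 = r, b_23 = t, b_31 = s (the cyclic quiver with r arrows 1→2, t arrows 2→3 and s arrows 3→1). If B is not mutation-equivalent to an acyclic matrix — i.e., for every finite sequence of matrix mutations applied to B, the quiver of the resulting matrix contains an oriented 3-cycle — then r, s, t ≥ 2. -/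
/-- The quiver of a skew-symmetric `3 × 3` integer matrix contains an oriented 3-cycle. -/
def HasOrientedCycle (B : Matrix (Fin 3) (Fin 3) ℤ) : Prop :=
  ∃ i j k : Fin 3, i ≠ j ∧ j ≠ k ∧ k ≠ i ∧ 0 < B i j ∧ 0 < B j k ∧ 0 < B k i

lemma maxMulNeg (x : ℤ) : max (x * -x) 0 = 0 := max_eq_right (by nlinarith [mul_self_nonneg x])
lemma maxNegMul (x : ℤ) : max (-x * x) 0 = 0 := max_eq_right (by nlinarith [mul_self_nonneg x])
lemma maxNegSq (x : ℤ) : max (-(x * x)) 0 = 0 := max_eq_right (by nlinarith [mul_self_nonneg x])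

lemma noCyc (M : Matrix (Fin 3) (Fin 3) ℤ)
    (h1 : ¬(0 < M 0 1 ∧ 0 < M 1 2 ∧ 0 < M 2 0))
    (h2 : ¬(0 < M 0 2 ∧ 0 < M 2 1 ∧ 0 < M 1 0)) :
    ¬ HasOrientedCycle M := by
  rintro ⟨i, j, k, hij, hjk, hki, a, b, c⟩
  fin_cases i <;> fin_cases j <;> fin_cases k <;>
    first
    | exact absurd rfl hij | exact absurd rfl hjk | exact absurd rfl hki
    | exact h1 ⟨a, b, c⟩ | exact h1 ⟨b, c, a⟩ | exact h1 ⟨c, a, b⟩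
    | exact h2 ⟨a, b, c⟩ | exact h2 ⟨b, c, a⟩ | exact h2 ⟨c, a, b⟩

set_option maxHeartbeats 1000000 in
/-- **Lemma 4.1(1) (Lee–Schiffler, after [BBH]).** If the cyclic quiver with `r ≥ 1`
arrows `1 → 2`, `t ≥ 1` arrows `2 → 3` and `s ≥ 1` arrows `3 → 1` is not mutation
equivalent to an acyclic quiver (i.e. every matrix obtained from it by a finite
sequence of mutations has an oriented cycle in its quiver), then `r, s, t ≥ 2`. -/
theorem nonacyclic_implies_two (r s t : ℕ)
    (hr : 1 ≤ r) (hs : 1 ≤ s) (ht : 1 ≤ t)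
    (B : Matrix (Fin 3) (Fin 3) ℤ)
    (hB : B = !![0, (r : ℤ), -(s : ℤ); -(r : ℤ), 0, (t : ℤ); (s : ℤ), -(t : ℤ), 0])
    (hnonacyclic : ∀ l : List (Fin 3), HasOrientedCycle (l.foldl matMut B)) :
    2 ≤ r ∧ 2 ≤ s ∧ 2 ≤ t := by
  subst hB
  have hr' : (1:ℤ) ≤ (r:ℤ) := by exact_mod_cast hr
  have hs' : (1:ℤ) ≤ (s:ℤ) := by exact_mod_cast hs
  have ht' : (1:ℤ) ≤ (t:ℤ) := by exact_mod_cast ht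
  have sgr : ((r:ℤ)).sign = 1 := Int.sign_eq_one_of_pos (by omega)
  have sgs : ((s:ℤ)).sign = 1 := Int.sign_eq_one_of_pos (by omega)
  have sgt : ((t:ℤ)).sign = 1 := Int.sign_eq_one_of_pos (by omega)
  have sq_r : 0 ≤ (r:ℤ) * r := mul_self_nonneg _
  have sq_s : 0 ≤ (s:ℤ) * s := mul_self_nonneg _
  have sq_t : 0 ≤ (t:ℤ) * t := mul_self_nonneg _
  have pd1 : ((s:ℤ) - t) * ((t:ℤ) - s) ≤ 0 := by nlinarith [sq_nonneg ((s:ℤ) - t)]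
  have pd2 : ((t:ℤ) - r) * ((r:ℤ) - t) ≤ 0 := by nlinarith [sq_nonneg ((t:ℤ) - r)]
  have pd3 : ((r:ℤ) - s) * ((s:ℤ) - r) ≤ 0 := by nlinarith [sq_nonneg ((r:ℤ) - s)]
  have pd1' : ((t:ℤ) - s) * ((s:ℤ) - t) ≤ 0 := by nlinarith [sq_nonneg ((s:ℤ) - t)]
  have pd2' : ((r:ℤ) - t) * ((t:ℤ) - r) ≤ 0 := by nlinarith [sq_nonneg ((t:ℤ) - r)]
  have pd3' : ((s:ℤ) - r) * ((r:ℤ) - s) ≤ 0 := by nlinarith [sq_nonneg ((r:ℤ) - s)]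
  by_contra hcon
  have hcase : r = 1 ∨ s = 1 ∨ t = 1 := by omega
  rcases hcase with h1 | h1 | h1
  · -- r = 1
    subst h1
    have e0 : matMut !![0, ((1:ℕ) : ℤ), -(s : ℤ); -((1:ℕ) : ℤ), 0, (t : ℤ); (s : ℤ), -(t : ℤ), 0] 0
        = !![0, -1, (s:ℤ); 1, 0, (t:ℤ) - s; -(s:ℤ), (s:ℤ) - t, 0] := by
      ext i j
      fin_cases i <;> fin_cases j <;>
        simp [matMut, sgs, Int.sign_neg, Int.sign_one, maxMulNeg, maxNegMul, maxNegSq] <;> omega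
    rcases le_or_gt (s:ℤ) (t:ℤ) with hle | hlt
    · refine absurd (hnonacyclic [0]) ?_
      rw [show List.foldl matMut _ [0] = matMut _ 0 from rfl, e0]
      apply noCyc <;> simp <;> omega
    · have sgd : ((s:ℤ) - t).sign = 1 := Int.sign_eq_one_of_pos (by omega)
      have e1 : matMut !![0, -1, (s:ℤ); 1, 0, (t:ℤ) - s; -(s:ℤ), (s:ℤ) - t, 0] 1
          = !![0, 1, (t:ℤ); -1, 0, (s:ℤ) - t; -(t:ℤ), (t:ℤ) - s, 0] := by
        ext i j
        fin_cases i <;> fin_cases j <;>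
          simp [matMut, sgd, Int.sign_neg, Int.sign_one, maxMulNeg, maxNegMul, maxNegSq] <;> omega
      refine absurd (hnonacyclic [0, 1]) ?_
      rw [show List.foldl matMut _ [0, 1] = matMut (matMut _ 0) 1 from rfl, e0, e1]
      apply noCyc <;> simp <;> omega
  · -- s = 1
    subst h1
    have e0 : matMut !![0, (r : ℤ), -((1:ℕ) : ℤ); -(r : ℤ), 0, (t : ℤ); ((1:ℕ) : ℤ), -(t : ℤ), 0] 2
        = !![0, (r:ℤ) - t, 1; (t:ℤ) - r, 0, -(t:ℤ); -1, (t:ℤ), 0] := by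
      ext i j
      fin_cases i <;> fin_cases j <;>
        simp [matMut, sgt, Int.sign_neg, Int.sign_one, maxMulNeg, maxNegMul, maxNegSq] <;> omega
    rcases le_or_gt (t:ℤ) (r:ℤ) with hle | hlt
    · refine absurd (hnonacyclic [2]) ?_
      rw [show List.foldl matMut _ [2] = matMut _ 2 from rfl, e0]
      apply noCyc <;> simp <;> omega
    · have sgd : ((t:ℤ) - r).sign = 1 := Int.sign_eq_one_of_pos (by omega)
      have e1 : matMut !![0, (r:ℤ) - t, 1; (t:ℤ) - r, 0, -(t:ℤ); -1, (t:ℤ), 0] 0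
          = !![0, (t:ℤ) - r, -1; (r:ℤ) - t, 0, -(r:ℤ); 1, (r:ℤ), 0] := by
        ext i j
        fin_cases i <;> fin_cases j <;>
          simp [matMut, sgd, Int.sign_neg, Int.sign_one, maxMulNeg, maxNegMul, maxNegSq] <;> omega
      refine absurd (hnonacyclic [2, 0]) ?_
      rw [show List.foldl matMut _ [2, 0] = matMut (matMut _ 2) 0 from rfl, e0, e1]
      apply noCyc <;> simp <;> omega
  · -- t = 1
    subst h1
    have e0 : matMut !![0, (r : ℤ), -(s : ℤ); -(r : ℤ), 0, ((1:ℕ) : ℤ); (s : ℤ), -((1:ℕ) : ℤ), 0] 1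
        = !![0, -(r:ℤ), (r:ℤ) - s; (r:ℤ), 0, -1; (s:ℤ) - r, 1, 0] := by
      ext i j
      fin_cases i <;> fin_cases j <;>
        simp [matMut, sgr, Int.sign_neg, Int.sign_one, maxMulNeg, maxNegMul, maxNegSq] <;> omega
    rcases le_or_gt (r:ℤ) (s:ℤ) with hle | hlt
    · refine absurd (hnonacyclic [1]) ?_
      rw [show List.foldl matMut _ [1] = matMut _ 1 from rfl, e0]
      apply noCyc <;> simp <;> omega
    · have sgd : ((r:ℤ) - s).sign = 1 := Int.sign_eq_one_of_pos (by omega)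
      have e1 : matMut !![0, -(r:ℤ), (r:ℤ) - s; (r:ℤ), 0, -1; (s:ℤ) - r, 1, 0] 2
          = !![0, -(s:ℤ), (s:ℤ) - r; (s:ℤ), 0, 1; (r:ℤ) - s, -1, 0] := by
        ext i j
        fin_cases i <;> fin_cases j <;>
          simp [matMut, sgd, Int.sign_neg, Int.sign_one, maxMulNeg, maxNegMul, maxNegSq] <;> omega
      refine absurd (hnonacyclic [1, 2]) ?_
      rw [show List.foldl matMut _ [1, 2] = matMut (matMut _ 1) 2 from rfl, e0, e1]
      apply noCyc <;> simp <;> omega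
end
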